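/- arXiv:1204.5637 — 3 statements merged into one kernel-verified Lean document; each statement's English description precedes it below -/
import Mathlib

section
/- Let n ≥ 1 and let T₁, ..., Tₙ be independent identically distributed random variables with the exponential distribution of rate 1 (density e^{-x} on (0,∞)). Let Mₙ = max(T₁, ..., Tₙ). Then for every real s < 1, E[e^{s Mₙ}] = Γ(n+1) Γ(1-s)/Γ(n+1-s). -/
open MeasureTheory ProbabilityTheory Real Set
open scoped ENNReal

/-!
By independence `P(Mₙ ≤ x) = (1 - e^{-x})ⁿ`, so `Mₙ` has density `n (1 - e^{-x})^{n-1} e^{-x}`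
on `(0, ∞)`. The substitution `u = e^{-x}` turns `E[e^{s Mₙ}]` into the Beta integral
`n ∫₀¹ u^{-s} (1 - u)^{n-1} du = n B(1 - s, n)`, and `n Γ(n) = Γ(n + 1)`.
-/

theorem integral_rpow_mul_one_sub_rpow {a b : ℝ} (ha : 0 < a) (hb : 0 < b) :
    ∫ x in Ioo (0 : ℝ) 1, x ^ (a - 1) * (1 - x) ^ (b - 1) = beta a b := by
  have hpdf : ∫ x, betaPDFReal a b x = 1 := by
    rw [integral_eq_lintegral_of_nonneg_ae (ae_of_all _ fun x => ?_) (by fun_prop)]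
    · simpa [betaPDF] using congrArg ENNReal.toReal (lintegral_betaPDF_eq_one ha hb)
    · by_cases hx : 0 < x ∧ x < 1
      · exact (betaPDFReal_pos hx.1 hx.2 ha hb).le
      · simp [betaPDFReal, hx]
  have hind : betaPDFReal a b =
      (Ioo 0 1).indicator fun x => (beta a b)⁻¹ * (x ^ (a - 1) * (1 - x) ^ (b - 1)) := by
    ext x
    simp only [betaPDFReal, indicator, mem_Ioo, one_div, mul_assoc]
  rw [hind, integral_indicator measurableSet_Ioo, integral_const_mul,
    inv_mul_eq_one₀ (beta_pos ha hb).ne'] at hpdf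
  exact hpdf.symm

theorem image_exp_neg_Ioi_zero : (fun x : ℝ => exp (-x)) '' Ioi 0 = Ioo 0 1 := by
  rw [show (fun x : ℝ => exp (-x)) = exp ∘ Neg.neg from rfl, image_comp, image_neg_Ioi, neg_zero,
    image_exp_Iio, exp_zero]

theorem integral_Ioi_comp_exp_neg_mul_exp_neg (f : ℝ → ℝ) :
    ∫ x in Ioi (0 : ℝ), f (exp (-x)) * exp (-x) = ∫ u in Ioo (0 : ℝ) 1, f u := by
  have hderiv : ∀ x ∈ Ioi (0 : ℝ), HasDerivWithinAt (fun x => exp (-x)) (-exp (-x)) (Ioi 0) x :=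
    fun x _ => by simpa using ((hasDerivAt_neg x).exp).hasDerivWithinAt
  have hinj : InjOn (fun x : ℝ => exp (-x)) (Ioi 0) :=
    fun x _ y _ h => neg_injective (exp_injective h)
  rw [← image_exp_neg_Ioi_zero,
    integral_image_eq_integral_abs_deriv_smul measurableSet_Ioi hderiv hinj]
  simp_rw [abs_neg, abs_of_pos (exp_pos _), smul_eq_mul, mul_comm]

theorem ProbabilityTheory.iIndepFun.measure_preimage_sup'_Iic {Ω ι β : Type*}
    [MeasurableSpace Ω] {μ : Measure Ω} [Fintype ι] [LinearOrder β] [MeasurableSpace β]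
    [TopologicalSpace β] [OpensMeasurableSpace β] [ClosedIicTopology β]
    {X : ι → Ω → β} (hX : iIndepFun X μ) (hne : (Finset.univ : Finset ι).Nonempty) (x : β) :
    μ ((fun ω => Finset.univ.sup' hne fun i => X i ω) ⁻¹' Iic x) = ∏ i, μ (X i ⁻¹' Iic x) := by
  have hpre : (fun ω => Finset.univ.sup' hne fun i => X i ω) ⁻¹' Iic x =
      ⋂ i ∈ Finset.univ, X i ⁻¹' Iic x := by
    ext ω
    simp [Finset.sup'_le_iff]
  rw [hpre, hX.measure_inter_preimage_eq_mul _ fun _ _ => measurableSet_Iic]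

noncomputable def expMaxPDFReal (n : ℕ) (t : ℝ) : ℝ := n * (1 - exp (-t)) ^ (n - 1) * exp (-t)

noncomputable def expMaxMeasure (n : ℕ) : Measure ℝ :=
  (volume.restrict (Ioi 0)).withDensity fun t => ENNReal.ofReal (expMaxPDFReal n t)

theorem continuous_expMaxPDFReal (n : ℕ) : Continuous (expMaxPDFReal n) := by
  unfold expMaxPDFReal
  fun_prop

theorem expMaxPDFReal_nonneg (n : ℕ) {t : ℝ} (ht : 0 ≤ t) : 0 ≤ expMaxPDFReal n t := by
  have : 0 ≤ 1 - exp (-t) := sub_nonneg.2 (exp_le_one_iff.2 (neg_nonpos.2 ht))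
  unfold expMaxPDFReal
  positivity

theorem hasDerivAt_one_sub_exp_neg_pow (n : ℕ) (t : ℝ) :
    HasDerivAt (fun t => (1 - exp (-t)) ^ n) (expMaxPDFReal n t) t := by
  have h : HasDerivAt (fun t => 1 - exp (-t)) (exp (-t)) t := by
    simpa using ((hasDerivAt_neg t).exp).const_sub 1
  simpa [expMaxPDFReal, mul_assoc] using h.fun_pow n

theorem expMaxMeasure_Iic {n : ℕ} (hn : n ≠ 0) (x : ℝ) :
    expMaxMeasure n (Iic x) = ENNReal.ofReal (cdf (expMeasure 1) x ^ n) := by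
  rw [expMaxMeasure, withDensity_apply _ measurableSet_Iic,
    Measure.restrict_restrict measurableSet_Iic, Iic_inter_Ioi, cdf_expMeasure_eq one_pos]
  split_ifs with hx
  · rw [← ofReal_integral_eq_lintegral_ofReal (continuous_expMaxPDFReal n).integrableOn_Ioc
      (ae_restrict_of_forall_mem measurableSet_Ioc fun t ht => expMaxPDFReal_nonneg n ht.1.le),
      ← intervalIntegral.integral_of_le hx, intervalIntegral.integral_eq_sub_of_hasDerivAt
        (fun t _ => hasDerivAt_one_sub_exp_neg_pow n t)
        ((continuous_expMaxPDFReal n).intervalIntegrable 0 x)]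
    simp [zero_pow hn]
  · rw [Ioc_eq_empty (by linarith), Measure.restrict_empty, lintegral_zero_measure, zero_pow hn,
      ENNReal.ofReal_zero]

theorem integral_expMaxMeasure (n : ℕ) (f : ℝ → ℝ) :
    ∫ x, f x ∂expMaxMeasure n = ∫ x in Ioi 0, expMaxPDFReal n x * f x := by
  rw [expMaxMeasure, integral_withDensity_eq_integral_toReal_smul
    (continuous_expMaxPDFReal n).measurable.ennreal_ofReal
    (ae_of_all _ fun _ => ENNReal.ofReal_lt_top)]
  refine setIntegral_congr_fun measurableSet_Ioi fun x hx => ?_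
  rw [smul_eq_mul, ENNReal.toReal_ofReal (expMaxPDFReal_nonneg n hx.le)]

theorem map_sup'_eq_expMaxMeasure {Ω ι : Type*} [MeasurableSpace Ω] {μ : Measure Ω}
    [IsProbabilityMeasure μ] [Fintype ι] {T : ι → Ω → ℝ} (hT : ∀ i, Measurable (T i))
    (hlaw : ∀ i, μ.map (T i) = expMeasure 1) (hindep : iIndepFun T μ)
    (hne : (Finset.univ : Finset ι).Nonempty) :
    μ.map (fun ω => Finset.univ.sup' hne (fun i => T i ω)) = expMaxMeasure (Fintype.card ι) := by
  have hM : Measurable fun ω => Finset.univ.sup' hne (fun i => T i ω) := by fun_prop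
  have hcdf (i : ι) (x : ℝ) : μ (T i ⁻¹' Iic x) = ENNReal.ofReal (cdf (expMeasure 1) x) := by
    have := isProbabilityMeasure_expMeasure one_pos
    rw [← Measure.map_apply (hT i) measurableSet_Iic, hlaw, ofReal_cdf]
  have : IsProbabilityMeasure (μ.map _) := Measure.isProbabilityMeasure_map hM.aemeasurable
  refine Measure.ext_of_Iic _ _ fun x => ?_
  have hcard : Fintype.card ι ≠ 0 := Finset.card_univ (α := ι) ▸ hne.card_pos.ne'
  rw [Measure.map_apply hM measurableSet_Iic, hindep.measure_preimage_sup'_Iic,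
    expMaxMeasure_Iic hcard, ENNReal.ofReal_pow (cdf_nonneg _ x)]
  simp [hcdf]

theorem integral_exp_mul_expMaxMeasure {n : ℕ} (hn : n ≠ 0) {s : ℝ} (hs : s < 1) :
    ∫ x, exp (s * x) ∂expMaxMeasure n = n * beta (1 - s) n := by
  have hpow (u : ℝ) : (1 - u) ^ (n - 1) = (1 - u) ^ ((n : ℝ) - 1) := by
    rw [← Nat.cast_pred (Nat.pos_of_ne_zero hn), rpow_natCast]
  have hsub (x : ℝ) : expMaxPDFReal n x * exp (s * x) =
      n * ((exp (-x)) ^ ((1 - s) - 1) * (1 - exp (-x)) ^ ((n : ℝ) - 1)) * exp (-x) := by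
    rw [expMaxPDFReal, hpow, ← exp_mul]
    ring_nf
  simp_rw [integral_expMaxMeasure, hsub]
  rw [integral_Ioi_comp_exp_neg_mul_exp_neg
      (fun u => n * (u ^ ((1 - s) - 1) * (1 - u) ^ ((n : ℝ) - 1))), integral_const_mul,
    integral_rpow_mul_one_sub_rpow (by linarith) (by positivity)]

/-- If `T₁, …, Tₙ` are i.i.d. `Exp(1)` random variables (`n ≥ 1`) and
`Mₙ = max(T₁, …, Tₙ)`, then for every real `s < 1`,
`E[e^(s Mₙ)] = Γ(n+1) Γ(1-s) / Γ(n+1-s)`. -/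
theorem mgf_max_exponential {Ω : Type*} [MeasurableSpace Ω] (μ : Measure Ω)
    [IsProbabilityMeasure μ]
    (n : ℕ) (hn : 1 ≤ n)
    (T : Fin n → Ω → ℝ) (hT : ∀ i, Measurable (T i))
    (hlaw : ∀ i, Measure.map (T i) μ = expMeasure 1)
    (hindep : iIndepFun T μ)
    (s : ℝ) (hs : s < 1) :
    ∫ ω, Real.exp (s * Finset.univ.sup' (Finset.univ_nonempty_iff.mpr ⟨⟨0, hn⟩⟩)
        (fun i => T i ω)) ∂μ =
      Gamma ((n : ℝ) + 1) * Gamma (1 - s) / Gamma ((n : ℝ) + 1 - s) := by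
  have hne : (Finset.univ : Finset (Fin n)).Nonempty := Finset.univ_nonempty_iff.mpr ⟨⟨0, hn⟩⟩
  have hn0 : (n : ℝ) ≠ 0 := Nat.cast_ne_zero.2 (by omega)
  have hM : Measurable fun ω => Finset.univ.sup' hne fun i => T i ω := by fun_prop
  rw [← integral_map (f := fun x => exp (s * x)) hM.aemeasurable (by fun_prop),
    map_sup'_eq_expMaxMeasure hT hlaw hindep, Fintype.card_fin,
    integral_exp_mul_expMaxMeasure (by omega) hs, beta, Gamma_add_one hn0]
  field_simp
  ring_nf
end

section
/- Let m ≥ 1 be a fixed integer, let T₁, T₂, ... be independent identically distributed random variables with the exponential distribution of rate 1, and let Mₙ^{(m)} denote the m-th largest value among T₁, ..., Tₙ (for n ≥ m). Then for every real x, P(Mₙ^{(m)} - log n ≤ x) → P(G_m ≥ e^{-x}) as n → ∞, where G_m has the Gamma(m) distribution; that is, Mₙ^{(m)} - log n converges in distribution to -log(G_m). -/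
/-!
`Mₙ⁽ᵐ⁾ ≤ y` exactly when fewer than `m` of the `n` values exceed `y`. For i.i.d. `Exp(1)` values
this count is binomial with success probability `e^{-y}`, which is `e^{-x}/n` at
`y = log n + x`; by the Poisson limit theorem its law tends to `Poisson(e^{-x})`, and
`P(Poisson(λ) < m) = P(G_m ≥ λ)`, as both sides have derivative `-e^{-λ} λ^{m-1}/(m-1)!` in `λ`
and vanish at infinity.
-/

open MeasureTheory ProbabilityTheory Real Filter Topology Finset

/-- The `m`-th largest of the values `x 0, …, x (n-1)` (1-indexed: `m = 1` gives the
maximum): the `m`-th element of the list sorted in decreasing order. -/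
noncomputable def kthLargest {n : ℕ} (x : Fin n → ℝ) (m : ℕ) : ℝ :=
  ((List.ofFn x).insertionSort (· ≥ ·)).getD (m - 1) 0

theorem Antitone.card_filter_lt_le_iff {α : Type*} [LinearOrder α] {N : ℕ} {f : Fin N → α}
    (hf : Antitone f) (k : Fin N) (y : α) : #{j | y < f j} ≤ k ↔ f k ≤ y := by
  constructor
  · intro hcard
    by_contra! hlt
    have hsub : Iic k ⊆ ({j | y < f j} : Finset (Fin N)) := fun j hj =>
      mem_filter.2 ⟨mem_univ _, hlt.trans_le (hf (mem_Iic.1 hj))⟩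
    have := card_le_card hsub
    simp only [Fin.card_Iic] at this
    omega
  · intro hle
    have hsub : ({j | y < f j} : Finset (Fin N)) ⊆ Iio k := fun j hj => by
      simp only [mem_filter, mem_univ, true_and] at hj
      exact mem_Iio.2 (lt_of_not_ge fun hkj => (hle.trans_lt hj).not_ge (hf hkj))
    simpa using card_le_card hsub

theorem List.countP_ofFn {α : Type*} {n : ℕ} (x : Fin n → α) (p : α → Prop) [DecidablePred p] :
    (List.ofFn x).countP (fun a => decide (p a)) = #{i | p (x i)} := by
  induction n with
  | zero => simp
  | succ n ih =>
    rw [List.ofFn_succ, List.countP_cons, ih, card_filter, card_filter, Fin.sum_univ_succ]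
    simp [add_comm]

theorem kthLargest_le_iff {n m : ℕ} (hm : 1 ≤ m) (hmn : m ≤ n) (x : Fin n → ℝ) (y : ℝ) :
    kthLargest x m ≤ y ↔ #{i | y < x i} < m := by
  set l := (List.ofFn x).insertionSort (· ≥ ·)
  have hk : m - 1 < l.length := by simp [l]; omega
  have hcount : #{i | y < x i} = #{j | y < l.get j} := by
    rw [← List.countP_ofFn, ← List.countP_ofFn, List.ofFn_get,
      (List.perm_insertionSort _ _).countP_eq]
  rw [kthLargest, List.getD_eq_getElem?_getD, List.getElem?_eq_getElem hk, Option.getD_some,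
    hcount, Nat.lt_iff_le_pred hm]
  exact ((List.sortedGE_insertionSort (l := List.ofFn x)).antitone_get.card_filter_lt_le_iff
    ⟨m - 1, hk⟩ y).symm

section Binomial

variable {Ω ι β : Type*} [Fintype ι]

theorem setOf_card_filter_mem_eq_biUnion (X : ι → Ω → β) (s : Set β) [DecidablePred (· ∈ s)]
    (k : ℕ) :
    {ω | #{i | X i ω ∈ s} = k} =
      ⋃ S ∈ powersetCard k univ, {ω | ({i | X i ω ∈ s} : Finset ι) = S} := by
  ext ω
  simp

variable [DecidableEq ι]

theorem setOf_filter_mem_eq_iInter (X : ι → Ω → β) (s : Set β) [DecidablePred (· ∈ s)]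
    (S : Finset ι) :
    {ω | ({i | X i ω ∈ s} : Finset ι) = S} =
      ⋂ i ∈ (univ : Finset ι), X i ⁻¹' (if i ∈ S then s else sᶜ) := by
  ext ω
  simp only [Set.mem_ofPred_eq, Set.mem_iInter, Set.mem_preimage, Finset.ext_iff, mem_filter,
    mem_univ, true_and, forall_const]
  refine forall_congr' fun i => ?_
  split_ifs with hi <;> simp [hi]

variable [MeasurableSpace Ω] {μ : Measure Ω} [IsProbabilityMeasure μ] [MeasurableSpace β]
  {X : ι → Ω → β} {s : Set β} [DecidablePred (· ∈ s)] {p : ℝ}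

theorem measurableSet_setOf_filter_mem_eq (hX : ∀ i, Measurable (X i)) (hs : MeasurableSet s)
    (S : Finset ι) : MeasurableSet {ω | ({i | X i ω ∈ s} : Finset ι) = S} := by
  rw [setOf_filter_mem_eq_iInter]
  exact .biInter (countable_toSet _) fun i _ => hX i (by split_ifs <;> [exact hs; exact hs.compl])

theorem measurableSet_setOf_card_filter_mem_eq (hX : ∀ i, Measurable (X i))
    (hs : MeasurableSet s) (k : ℕ) : MeasurableSet {ω | #{i | X i ω ∈ s} = k} := by
  rw [setOf_card_filter_mem_eq_biUnion]
  exact .biUnion (countable_toSet _) fun S _ => measurableSet_setOf_filter_mem_eq hX hs S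

theorem measureReal_setOf_filter_mem_eq (hX : ∀ i, Measurable (X i)) (hindep : iIndepFun X μ)
    (hs : MeasurableSet s) (hp : ∀ i, μ.real (X i ⁻¹' s) = p) (S : Finset ι) :
    μ.real {ω | ({i | X i ω ∈ s} : Finset ι) = S} = p ^ #S * (1 - p) ^ (Fintype.card ι - #S) := by
  have hfactor (i : ι) :
      μ.real (X i ⁻¹' if i ∈ S then s else sᶜ) = if i ∈ S then p else 1 - p := by
    split_ifs
    · exact hp i
    · rw [Set.preimage_compl, probReal_compl_eq_one_sub (hX i hs), hp]
  rw [setOf_filter_mem_eq_iInter, measureReal_def,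
    hindep.measure_inter_preimage_eq_mul univ fun i _ => by
      split_ifs <;> [exact hs; exact hs.compl],
    ENNReal.toReal_prod]
  simp only [← measureReal_def, hfactor]
  rw [prod_ite, prod_const, prod_const, filter_mem_eq_inter, univ_inter, filter_not, card_sdiff]
  simp

theorem measureReal_card_filter_mem_eq (hX : ∀ i, Measurable (X i)) (hindep : iIndepFun X μ)
    (hs : MeasurableSet s) (hp : ∀ i, μ.real (X i ⁻¹' s) = p) (k : ℕ) :
    μ.real {ω | #{i | X i ω ∈ s} = k} =
      (Fintype.card ι).choose k * p ^ k * (1 - p) ^ (Fintype.card ι - k) := by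
  rw [setOf_card_filter_mem_eq_biUnion, measureReal_biUnion_finset, sum_congr rfl fun S hS => by
      rw [measureReal_setOf_filter_mem_eq hX hindep hs hp, (mem_powersetCard.1 hS).2],
    sum_const, card_powersetCard, card_univ, nsmul_eq_mul, mul_assoc]
  · intro S _ S' _ hne
    exact Set.disjoint_left.2 fun ω h h' => hne (h.symm.trans h')
  · exact fun S _ => measurableSet_setOf_filter_mem_eq hX hs S

end Binomial

theorem measureReal_kthLargest_le {Ω : Type*} [MeasurableSpace Ω] {μ : Measure Ω}
    [IsProbabilityMeasure μ] {n m : ℕ} (hm : 1 ≤ m) (hmn : m ≤ n) {X : Fin n → Ω → ℝ}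
    (hX : ∀ i, Measurable (X i)) (hindep : iIndepFun X μ) {y p : ℝ}
    (hp : ∀ i, μ.real (X i ⁻¹' Set.Ioi y) = p) :
    μ.real {ω | kthLargest (fun i => X i ω) m ≤ y} =
      ∑ k ∈ range m, n.choose k * p ^ k * (1 - p) ^ (n - k) := by
  have hevent : {ω | kthLargest (fun i => X i ω) m ≤ y} =
      ⋃ k ∈ range m, {ω | #{i | X i ω ∈ Set.Ioi y} = k} := by
    ext ω
    simp [kthLargest_le_iff hm hmn]
  rw [hevent, measureReal_biUnion_finset, sum_congr rfl fun k _ =>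
    measureReal_card_filter_mem_eq hX hindep measurableSet_Ioi hp k, Fintype.card_fin]
  · intro k _ k' _ hne
    exact Set.disjoint_left.2 fun ω h h' => hne (h.symm.trans h')
  · exact fun k _ => measurableSet_setOf_card_filter_mem_eq hX measurableSet_Ioi k

theorem expMeasure_real_Ioi {r : ℝ} (hr : 0 < r) {y : ℝ} (hy : 0 ≤ y) :
    (expMeasure r).real (Set.Ioi y) = exp (-(r * y)) := by
  have := isProbabilityMeasure_expMeasure hr
  rw [← Set.compl_Iic, probReal_compl_eq_one_sub measurableSet_Iic, ← cdf_eq_real,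
    cdf_expMeasure_eq hr, if_pos hy, sub_sub_cancel]

theorem hasDerivAt_neg_sum_exp_neg_mul_pow_div_factorial (k : ℕ) (x : ℝ) :
    HasDerivAt (fun x => -∑ j ∈ range (k + 1), exp (-x) * x ^ j / j.factorial)
      (exp (-x) * x ^ k / k.factorial) x := by
  induction k with
  | zero => simpa using (hasDerivAt_neg x).exp.fun_neg
  | succ k ih =>
    simp only [sum_range_succ _ (k + 1), neg_add]
    refine (ih.fun_add (((hasDerivAt_neg x).exp.fun_mul (hasDerivAt_pow (k + 1) x)).div_const
      ((k + 1).factorial : ℝ)).fun_neg).congr_deriv ?_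
    rw [Nat.factorial_succ, Nat.add_sub_cancel]
    push_cast
    field_simp
    ring

theorem gammaMeasure_real_Ici (k : ℕ) {lam : ℝ} (hlam : 0 ≤ lam) :
    (gammaMeasure (k + 1) 1).real (Set.Ici lam) =
      ∑ j ∈ range (k + 1), exp (-lam) * lam ^ j / j.factorial := by
  set F : ℝ → ℝ := fun x => -∑ j ∈ range (k + 1), exp (-x) * x ^ j / j.factorial
  have hF x : HasDerivAt F (exp (-x) * x ^ k / k.factorial) x :=
    hasDerivAt_neg_sum_exp_neg_mul_pow_div_factorial k x
  have hF_tendsto : Tendsto F atTop (𝓝 0) := by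
    have := tendsto_finsetSum (range (k + 1)) fun j _ =>
      (tendsto_pow_mul_exp_neg_atTop_nhds_zero j).div_const (j.factorial : ℝ)
    simpa [F, mul_comm] using this.neg
  have hpdf : ∀ x ∈ Set.Ioi lam,
      gammaPDF (k + 1) 1 x = ENNReal.ofReal (exp (-x) * x ^ k / k.factorial) := by
    intro x hx
    rw [gammaPDF, gammaPDFReal, if_pos (hlam.trans hx.le), add_sub_cancel_right,
      Real.rpow_natCast, Real.Gamma_nat_eq_factorial]
    congr 1
    simp only [one_rpow, one_mul]
    ring
  have hnonneg : ∀ x ∈ Set.Ioi lam, 0 ≤ exp (-x) * x ^ k / k.factorial := fun x hx => by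
    have : 0 ≤ x := hlam.trans hx.le
    positivity
  have hint := integrableOn_Ioi_deriv_of_nonneg' (fun x _ => hF x) hnonneg hF_tendsto
  rw [measureReal_def, gammaMeasure, withDensity_apply _ measurableSet_Ici,
    Measure.restrict_congr_set Ioi_ae_eq_Ici.symm, setLIntegral_congr_fun measurableSet_Ioi hpdf,
    ← ofReal_integral_eq_lintegral_ofReal hint
      ((ae_restrict_iff' measurableSet_Ioi).2 (ae_of_all _ hnonneg)),
    ENNReal.toReal_ofReal (setIntegral_nonneg measurableSet_Ioi hnonneg),
    integral_Ioi_of_hasDerivAt_of_tendsto' (fun x _ => hF x) hint hF_tendsto]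
  simp [F]

/-- If `T₁, T₂, …` are i.i.d. `Exp(1)` random variables and `Mₙ⁽ᵐ⁾` denotes the `m`-th
largest among `T₁, …, Tₙ` (`m ≥ 1` fixed), then for every real `x`,
`P(Mₙ⁽ᵐ⁾ - log n ≤ x) → P(G_m ≥ e^(-x))` as `n → ∞`, where `G_m ~ Gamma(m)`; i.e.
`Mₙ⁽ᵐ⁾ - log n` converges in distribution to `-log G_m`. -/
theorem kth_largest_exponential_tendsto {Ω : Type*} [MeasurableSpace Ω] (μ : Measure Ω)
    [IsProbabilityMeasure μ]
    (m : ℕ) (hm : 1 ≤ m)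
    (T : ℕ → Ω → ℝ) (hT : ∀ i, Measurable (T i))
    (hlaw : ∀ i, Measure.map (T i) μ = expMeasure 1)
    (hindep : iIndepFun T μ)
    (x : ℝ) :
    Tendsto (fun n : ℕ =>
        (μ {ω | kthLargest (fun i : Fin n => T i ω) m - Real.log n ≤ x}).toReal)
      atTop (𝓝 ((gammaMeasure (m : ℝ) 1 (Set.Ici (Real.exp (-x)))).toReal)) := by
  obtain ⟨k, rfl⟩ : ∃ k, m = k + 1 := ⟨m - 1, by omega⟩
  set lam := exp (-x)
  have hpoisson : Tendsto (fun n : ℕ => ∑ j ∈ range (k + 1),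
      n.choose j * (lam / n) ^ j * (1 - lam / n) ^ (n - j)) atTop
      (𝓝 (∑ j ∈ range (k + 1), exp (-lam) * lam ^ j / j.factorial)) :=
    tendsto_finsetSum _ fun j _ => tendsto_choose_mul_pow_of_tendsto_mul_atTop j <|
      tendsto_const_nhds.congr' <| (eventually_ne_atTop 0).mono fun n hn =>
        (mul_div_cancel₀ _ (Nat.cast_ne_zero.2 hn)).symm
  rw [Nat.cast_succ, ← measureReal_def, gammaMeasure_real_Ici k (exp_pos _).le]
  refine hpoisson.congr' ?_
  filter_upwards [eventually_ge_atTop (k + 1),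
    (tendsto_log_atTop.comp tendsto_natCast_atTop_atTop).eventually_ge_atTop (-x)]
    with n hn hlog
  have hy : 0 ≤ log n + x := by simp only [Function.comp_apply] at hlog; linarith
  have htail : exp (-(1 * (log n + x))) = lam / n := by
    rw [one_mul, neg_add, exp_add, exp_neg (log n), exp_log (Nat.cast_pos.2 (by omega))]
    ring
  simp_rw [sub_le_iff_le_add']
  rw [← measureReal_def, measureReal_kthLargest_le hm hn (fun i => hT i)
    (hindep.precomp Fin.val_injective) fun i => by
      rw [← map_measureReal_apply (hT i) measurableSet_Ioi, hlaw, expMeasure_real_Ioi one_pos hy,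
        htail]]
end

section
/- Let 0 < α < 1. The function g(x) = (sin(πα)/(πα)) · 1/(x² + 2cos(πα)x + 1) on (0,∞) is a probability density, and for every real s with -1 < s < 1, ∫_0^∞ x^s g(x) dx = sin(παs)/(α sin(πs)) (interpreted as 1 when s = 0). -/
/-!
Write `Q_θ(x) = x² + 2 cos θ x + 1 = |x + e^{iθ}|²` with `θ = πα ∈ (0, π)`. The normalisation is
an arctangent integral. For the moments with `-1 < s < 0`, consider the Stieltjes transform
`G(z) = ∫₀^∞ x^s / (x + z) dx`. It is holomorphic on the slit plane `ℂ \ (-∞, 0]`, and the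
substitution `x ↦ r x` gives `G(r) = r^s G(1)` for `r > 0`, so by the identity theorem
`G(z) = G(1) z^s` on the whole slit plane. The substitution `x = t / (1 - t)` turns `G(1)` into
the beta integral `B(s + 1, -s) = Γ(s + 1) Γ(-s) = -π / sin(πs)`. Taking imaginary parts at
`z = e^{iθ}`, where `Im (x + z)⁻¹ = -sin θ / Q_θ(x)`, gives
`∫₀^∞ x^s / Q_θ(x) dx = π sin(sθ) / (sin(πs) sin θ)`. The inversion `x ↦ 1/x` maps `dx / Q_θ(x)`
to `dx / Q_θ(x)` and `x^s` to `x^{-s}`, which covers `0 < s < 1`.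
-/

open MeasureTheory Real Set Filter Topology
open Complex (slitPlane)

lemma quadratic_eq_sq_add_sq (x θ : ℝ) :
    x ^ 2 + 2 * Real.cos θ * x + 1 = (x + Real.cos θ) ^ 2 + Real.sin θ ^ 2 := by
  linear_combination -(sin_sq_add_cos_sq θ)

lemma quadratic_pos (x : ℝ) {θ : ℝ} (hθ : Real.sin θ ≠ 0) :
    0 < x ^ 2 + 2 * Real.cos θ * x + 1 := by
  rw [quadratic_eq_sq_add_sq]
  positivity

lemma integral_one_div_quadratic {θ : ℝ} (hθ₀ : 0 < θ) (hθπ : θ < π) :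
    ∫ x in Ioi (0 : ℝ), 1 / (x ^ 2 + 2 * Real.cos θ * x + 1) = θ / Real.sin θ := by
  have hsin : 0 < Real.sin θ := sin_pos_of_pos_of_lt_pi hθ₀ hθπ
  set F := fun x => arctan ((x + Real.cos θ) / Real.sin θ) / Real.sin θ
  have hderiv (x : ℝ) : HasDerivAt F (1 / (x ^ 2 + 2 * Real.cos θ * x + 1)) x := by
    refine ((((hasDerivAt_id x).add_const _).div_const _).arctan.div_const _).congr_deriv ?_
    simp only [id, quadratic_eq_sq_add_sq]
    field_simp
    ring
  have hlim : Tendsto F atTop (𝓝 (π / 2 / Real.sin θ)) :=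
    ((tendsto_arctan_atTop.mono_right nhdsWithin_le_nhds).comp
      ((tendsto_atTop_add_const_right _ _ tendsto_id).atTop_div_const hsin)).div_const _
  have hcot : Real.cos θ / Real.sin θ = tan (π / 2 - θ) := by
    rw [tan_pi_div_two_sub, tan_eq_sin_div_cos, inv_div]
  rw [integral_Ioi_of_hasDerivAt_of_nonneg' (fun x _ => hderiv x)
    (fun x _ => (one_div_pos.2 (quadratic_pos x hsin.ne')).le) hlim]
  simp only [F, zero_add, hcot, arctan_tan (by linarith : -(π / 2) < π / 2 - θ) (by linarith)]
  ring

lemma integral_rpow_neg_div_quadratic (s c : ℝ) :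
    ∫ x in Ioi (0 : ℝ), x ^ (-s) / (x ^ 2 + 2 * c * x + 1) =
      ∫ x in Ioi (0 : ℝ), x ^ s / (x ^ 2 + 2 * c * x + 1) := by
  rw [← integral_comp_rpow_Ioi _ (p := -1) (by norm_num)]
  refine setIntegral_congr_fun measurableSet_Ioi fun x (hx : 0 < x) => ?_
  rw [smul_eq_mul, rpow_neg_one, inv_rpow hx.le, rpow_neg hx.le, inv_inv,
    show (-1 - 1 : ℝ) = -(2 : ℕ) by norm_num, rpow_neg hx.le, rpow_natCast]
  field_simp
  ring

lemma integrableOn_Ioi_rpow_mul_inv_one_add_pow {s : ℝ} {n : ℕ} (hs : -1 < s)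
    (hsn : s + 1 < n) : IntegrableOn (fun x : ℝ => x ^ s * ((1 + x) ^ n)⁻¹) (Ioi 0) := by
  have hmeas : AEStronglyMeasurable (fun x : ℝ => x ^ s * ((1 + x) ^ n)⁻¹) := by fun_prop
  rw [← Ioc_union_Ioi_eq_Ioi zero_le_one]
  refine IntegrableOn.union ?_ ?_
  · have hint : IntegrableOn (fun x : ℝ => x ^ s) (Ioc 0 1) :=
      (intervalIntegrable_iff_integrableOn_Ioc_of_le zero_le_one).1
        (intervalIntegral.intervalIntegrable_rpow' hs)
    refine hint.mono' hmeas.restrict ((ae_restrict_iff' measurableSet_Ioc).2 (.of_forall ?_))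
    rintro x ⟨hx, -⟩
    rw [norm_of_nonneg (by positivity)]
    exact mul_le_of_le_one_right (rpow_pos_of_pos hx s).le
      (inv_le_one_of_one_le₀ (one_le_pow₀ (by linarith)))
  · refine (integrableOn_Ioi_rpow_of_lt (by linarith : s - n < -1) zero_lt_one).mono'
      hmeas.restrict ((ae_restrict_iff' measurableSet_Ioi).2 (.of_forall fun x (hx : 1 < x) => ?_))
    have hx0 : 0 < x := by linarith
    rw [norm_of_nonneg (by positivity), rpow_sub hx0, rpow_natCast, div_eq_mul_inv]
    gcongr
    linarith

lemma exists_mul_one_add_le_norm_ofReal_add {z₀ : ℂ} (hz₀ : z₀ ∈ slitPlane) :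
    ∃ ε > 0, ∃ c > 0, ∀ z ∈ Metric.ball z₀ ε, ∀ x : ℝ, 0 ≤ x →
      c * (1 + x) ≤ ‖(x : ℂ) + z‖ := by
  obtain ⟨δ, hδ, hball⟩ := Metric.isOpen_iff.1 Complex.isOpen_slitPlane z₀ hz₀
  refine ⟨δ / 2, by positivity, δ / 2 / (1 + ‖z₀‖ + δ), by positivity, fun z hz x hx => ?_⟩
  rw [Metric.mem_ball] at hz
  have hfar : δ / 2 ≤ ‖(x : ℂ) + z‖ := by
    have hout : -(x : ℂ) ∉ Metric.ball z₀ δ := fun h =>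
      (Complex.neg_ofReal_mem_slitPlane.1 (hball h)).not_ge hx
    rw [Metric.mem_ball, not_lt] at hout
    calc δ / 2 ≤ dist (-(x : ℂ)) z₀ - dist z z₀ := by linarith
      _ ≤ dist (-(x : ℂ)) z := by linarith [dist_triangle (-(x : ℂ)) z z₀]
      _ = ‖(x : ℂ) + z‖ := by rw [dist_eq_norm, ← norm_neg]; ring_nf
  have hgrow : x - (‖z₀‖ + δ / 2) ≤ ‖(x : ℂ) + z‖ := by
    have hz_le : ‖z‖ ≤ ‖z₀‖ + δ / 2 := by
      linarith [norm_le_norm_add_norm_sub' z z₀, dist_eq_norm z z₀]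
    have htri := norm_sub_norm_le (x : ℂ) (-z)
    simp only [sub_neg_eq_add, norm_neg, Complex.norm_real, norm_of_nonneg hx] at htri
    linarith
  rw [div_mul_eq_mul_div, div_le_iff₀ (by positivity)]
  nlinarith [mul_le_mul_of_nonneg_left hfar (by positivity : 0 ≤ 1 + ‖z₀‖ + δ / 2)]

noncomputable def stieltjesRpow (s : ℝ) (z : ℂ) : ℂ :=
  ∫ x in Ioi (0 : ℝ), ((x ^ s : ℝ) : ℂ) / ((x : ℂ) + z)

lemma norm_rpow_div_pow_le {s c x : ℝ} {z : ℂ} (n : ℕ) (hx : 0 < x) (hc : 0 < c)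
    (hcz : c * (1 + x) ≤ ‖(x : ℂ) + z‖) :
    ‖((x ^ s : ℝ) : ℂ) / ((x : ℂ) + z) ^ n‖ ≤ (c ^ n)⁻¹ * (x ^ s * ((1 + x) ^ n)⁻¹) := by
  rw [norm_div, norm_pow, Complex.norm_real, norm_of_nonneg (rpow_nonneg hx.le s),
    mul_left_comm, ← mul_inv, ← mul_pow, div_eq_mul_inv]
  gcongr

lemma integrableOn_rpow_div_ofReal_add {s : ℝ} (hs₁ : -1 < s) (hs₀ : s < 0) {z : ℂ}
    (hz : z ∈ slitPlane) :
    IntegrableOn (fun x : ℝ => ((x ^ s : ℝ) : ℂ) / ((x : ℂ) + z)) (Ioi 0) := by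
  obtain ⟨ε, hε, c, hc, hcz⟩ := exists_mul_one_add_le_norm_ofReal_add hz
  refine ((integrableOn_Ioi_rpow_mul_inv_one_add_pow (n := 1) hs₁ (by simpa)).const_mul
    (c ^ 1)⁻¹).mono' (by fun_prop : Measurable _).aestronglyMeasurable
    ((ae_restrict_iff' measurableSet_Ioi).2 (.of_forall fun x (hx : 0 < x) => ?_))
  simpa using norm_rpow_div_pow_le 1 hx hc (hcz z (Metric.mem_ball_self hε) x hx.le)

lemma differentiableOn_stieltjesRpow {s : ℝ} (hs₁ : -1 < s) (hs₀ : s < 0) :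
    DifferentiableOn ℂ (stieltjesRpow s) slitPlane := by
  intro z₀ hz₀
  obtain ⟨ε, hε, c, hc, hcz⟩ := exists_mul_one_add_le_norm_ofReal_add hz₀
  have h_bound : ∀ᵐ x ∂volume.restrict (Ioi 0), ∀ z ∈ Metric.ball z₀ ε,
      ‖-((x ^ s : ℝ) : ℂ) / ((x : ℂ) + z) ^ 2‖ ≤ (c ^ 2)⁻¹ * (x ^ s * ((1 + x) ^ 2)⁻¹) := by
    refine (ae_restrict_iff' measurableSet_Ioi).2 (.of_forall fun x (hx : 0 < x) z hz => ?_)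
    rw [neg_div, norm_neg]
    exact norm_rpow_div_pow_le 2 hx hc (hcz z hz x hx.le)
  have h_diff : ∀ᵐ x ∂volume.restrict (Ioi 0), ∀ z ∈ Metric.ball z₀ ε,
      HasDerivAt (fun z => ((x ^ s : ℝ) : ℂ) / ((x : ℂ) + z))
        (-((x ^ s : ℝ) : ℂ) / ((x : ℂ) + z) ^ 2) z := by
    refine (ae_restrict_iff' measurableSet_Ioi).2 (.of_forall fun x (hx : 0 < x) z hz => ?_)
    have hne : (x : ℂ) + z ≠ 0 :=
      norm_pos_iff.1 ((by positivity : 0 < c * (1 + x)).trans_le (hcz z hz x hx.le))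
    simpa [div_eq_mul_inv, neg_mul] using
      (((hasDerivAt_id z).const_add (x : ℂ)).inv hne).const_mul ((x ^ s : ℝ) : ℂ)
  exact (hasDerivAt_integral_of_dominated_loc_of_deriv_le (μ := volume.restrict (Ioi 0))
    (F := fun z x => ((x ^ s : ℝ) : ℂ) / ((x : ℂ) + z)) (Metric.ball_mem_nhds z₀ hε)
    (.of_forall fun z => (by fun_prop : Measurable _).aestronglyMeasurable)
    (integrableOn_rpow_div_ofReal_add hs₁ hs₀ hz₀)
    (by fun_prop : Measurable _).aestronglyMeasurable h_bound
    ((integrableOn_Ioi_rpow_mul_inv_one_add_pow hs₁ (by norm_num; linarith)).const_mul _)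
    h_diff).2.differentiableAt.differentiableWithinAt

lemma stieltjesRpow_ofReal (s : ℝ) {r : ℝ} (hr : 0 < r) :
    stieltjesRpow s r = ↑(r ^ s) * stieltjesRpow s 1 := by
  have hsub :=
    integral_comp_mul_left_Ioi' (fun x : ℝ => ((x ^ s : ℝ) : ℂ) / ((x : ℂ) + r)) 0 hr
  rw [mul_zero] at hsub
  rw [stieltjesRpow, ← hsub, stieltjesRpow, ← integral_const_mul, ← integral_smul]
  refine setIntegral_congr_fun measurableSet_Ioi fun x (hx : 0 < x) => ?_
  have hx1 : (x : ℂ) + 1 ≠ 0 := by exact_mod_cast (by linarith : x + 1 ≠ 0)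
  have hr0 : (r : ℂ) ≠ 0 := by exact_mod_cast hr.ne'
  rw [mul_rpow hr.le hx.le, Complex.real_smul]
  push_cast
  field_simp

lemma stieltjesRpow_eq_mul_cpow {s : ℝ} (hs₁ : -1 < s) (hs₀ : s < 0) {z : ℂ}
    (hz : z ∈ slitPlane) : stieltjesRpow s z = stieltjesRpow s 1 * z ^ (s : ℂ) := by
  have hG := (differentiableOn_stieltjesRpow hs₁ hs₀).analyticOnNhd Complex.isOpen_slitPlane
  have hpow : AnalyticOnNhd ℂ (fun z : ℂ => stieltjesRpow s 1 * z ^ (s : ℂ)) slitPlane :=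
    (DifferentiableOn.const_mul (fun z hz => (differentiableAt_id.cpow_const hz)
      |>.differentiableWithinAt) _).analyticOnNhd Complex.isOpen_slitPlane
  have hconn : IsPreconnected slitPlane :=
    (Complex.starConvex_one_slitPlane.isPathConnected Complex.one_mem_slitPlane).isConnected
      |>.isPreconnected
  refine hG.eqOn_of_preconnected_of_frequently_eq hpow hconn Complex.one_mem_slitPlane ?_ hz
  have hreal : ∀ᶠ x : ℝ in 𝓝[≠] 1,
      stieltjesRpow s x = stieltjesRpow s 1 * (x : ℂ) ^ (s : ℂ) := by
    filter_upwards [(eventually_gt_nhds one_pos).filter_mono nhdsWithin_le_nhds] with x hx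
    rw [stieltjesRpow_ofReal s hx, Complex.ofReal_cpow hx.le, mul_comm]
  have hofReal : Tendsto (fun x : ℝ => (x : ℂ)) (𝓝[≠] 1) (𝓝[≠] 1) := by
    simpa using Complex.continuous_ofReal.continuousWithinAt.tendsto_nhdsWithin
      (x := 1) (s := {1}ᶜ) (t := {1}ᶜ) fun x hx => by simpa using hx
  exact hofReal.frequently hreal.frequently

lemma image_div_one_sub_Ioo : (fun t : ℝ => t / (1 - t)) '' Ioo 0 1 = Ioi 0 := by
  ext x
  constructor
  · rintro ⟨t, ⟨ht0, ht1⟩, rfl⟩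
    exact div_pos ht0 (by linarith)
  · intro (hx : 0 < x)
    refine ⟨x / (1 + x), ⟨by positivity, (div_lt_one (by positivity)).2 (by linarith)⟩, ?_⟩
    field_simp
    ring

lemma injOn_div_one_sub_Ioo : InjOn (fun t : ℝ => t / (1 - t)) (Ioo 0 1) := by
  rintro a ⟨-, ha⟩ b ⟨-, hb⟩ (h : a / (1 - a) = b / (1 - b))
  rw [div_eq_div_iff (by linarith) (by linarith)] at h
  linarith

lemma betaIntegral_eq_stieltjesRpow_one (s : ℝ) :
    Complex.betaIntegral (s + 1) (-s) = stieltjesRpow s 1 := by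
  have hderiv : ∀ t ∈ Ioo (0 : ℝ) 1,
      HasDerivWithinAt (fun t : ℝ => t / (1 - t)) ((1 - t) ^ 2)⁻¹ (Ioo 0 1) t := by
    rintro t ⟨-, ht1⟩
    have h1 : 1 - t ≠ 0 := by linarith
    refine (((hasDerivAt_id t).div ((hasDerivAt_id t).const_sub 1) h1).congr_deriv ?_)
      |>.hasDerivWithinAt
    simp only [id]
    field_simp
    ring
  rw [stieltjesRpow, ← image_div_one_sub_Ioo, integral_image_eq_integral_abs_deriv_smul
      measurableSet_Ioo hderiv injOn_div_one_sub_Ioo, Complex.betaIntegral,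
    intervalIntegral.integral_of_le zero_le_one, integral_Ioc_eq_integral_Ioo]
  refine setIntegral_congr_fun measurableSet_Ioo fun t ⟨ht0, ht1⟩ => ?_
  have h1 : 0 < 1 - t := by linarith
  have hreal : t ^ s * (1 - t) ^ (-s - 1) =
      |((1 - t) ^ 2)⁻¹| * ((t / (1 - t)) ^ s / (t / (1 - t) + 1)) := by
    rw [abs_of_pos (by positivity), div_rpow ht0.le h1.le, rpow_sub h1, rpow_neg h1.le, rpow_one]
    field_simp
    ring
  rw [show (s : ℂ) + 1 - 1 = (s : ℂ) by ring,
    show -(s : ℂ) - 1 = ((-s - 1 : ℝ) : ℂ) by push_cast; ring,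
    show 1 - (t : ℂ) = ((1 - t : ℝ) : ℂ) by push_cast; ring, ← Complex.ofReal_cpow ht0.le,
    ← Complex.ofReal_cpow h1.le, ← Complex.ofReal_mul, hreal, Complex.real_smul]
  push_cast
  ring

lemma stieltjesRpow_one {s : ℝ} (hs₁ : -1 < s) (hs₀ : s < 0) :
    stieltjesRpow s 1 = ↑(-(π / Real.sin (π * s))) := by
  have hbeta := Complex.Gamma_mul_Gamma_eq_betaIntegral (s := s + 1) (t := -s)
    (by simp; linarith) (by simpa using hs₀)
  have hreflect := Complex.Gamma_mul_Gamma_one_sub (s + 1)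
  rw [show (s : ℂ) + 1 + -s = 1 by ring, Complex.Gamma_one, one_mul,
    betaIntegral_eq_stieltjesRpow_one] at hbeta
  rw [show 1 - ((s : ℂ) + 1) = -s by ring, hbeta, mul_add, mul_one, Complex.sin_add_pi]
    at hreflect
  rw [hreflect]
  push_cast
  ring

lemma normSq_ofReal_add_exp_mul_I (x θ : ℝ) :
    Complex.normSq (x + Complex.exp (θ * Complex.I)) = x ^ 2 + 2 * Real.cos θ * x + 1 := by
  rw [Complex.normSq_apply, quadratic_eq_sq_add_sq]
  simp only [Complex.add_re, Complex.add_im, Complex.ofReal_re, Complex.ofReal_im,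
    Complex.exp_ofReal_mul_I_re, Complex.exp_ofReal_mul_I_im]
  ring

lemma im_stieltjesRpow_exp_mul_I {s : ℝ} (hs₁ : -1 < s) (hs₀ : s < 0) {θ : ℝ}
    (hθ : Complex.exp (θ * Complex.I) ∈ slitPlane) :
    (stieltjesRpow s (Complex.exp (θ * Complex.I))).im =
      -(Real.sin θ * ∫ x in Ioi (0 : ℝ), x ^ s / (x ^ 2 + 2 * Real.cos θ * x + 1)) := by
  rw [stieltjesRpow, ← RCLike.im_to_complex,
    ← integral_im (integrableOn_rpow_div_ofReal_add hs₁ hs₀ hθ), ← integral_const_mul,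
    ← integral_neg]
  refine setIntegral_congr_fun measurableSet_Ioi fun x _ => ?_
  rw [RCLike.im_to_complex, div_eq_mul_inv, Complex.im_ofReal_mul, Complex.inv_im,
    normSq_ofReal_add_exp_mul_I, Complex.add_im, Complex.ofReal_im, Complex.exp_ofReal_mul_I_im]
  ring

lemma integral_rpow_div_quadratic_of_neg {s θ : ℝ} (hs₁ : -1 < s) (hs₀ : s < 0)
    (hθ₀ : 0 < θ) (hθπ : θ < π) :
    ∫ x in Ioi (0 : ℝ), x ^ s / (x ^ 2 + 2 * Real.cos θ * x + 1) =
      π * Real.sin (s * θ) / (Real.sin (π * s) * Real.sin θ) := by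
  have hsin : 0 < Real.sin θ := sin_pos_of_pos_of_lt_pi hθ₀ hθπ
  set z := Complex.exp (θ * Complex.I)
  have hz : z ∈ slitPlane := by
    rw [Complex.mem_slitPlane_iff, Complex.exp_ofReal_mul_I_im]
    exact Or.inr hsin.ne'
  have hcpow : z ^ (s : ℂ) = Complex.exp ((s * θ : ℝ) * Complex.I) := by
    rw [Complex.cpow_def_of_ne_zero (Complex.exp_ne_zero _),
      Complex.log_exp (by simp; linarith) (by simp; linarith)]
    push_cast
    ring_nf
  have him := im_stieltjesRpow_exp_mul_I hs₁ hs₀ hz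
  rw [stieltjesRpow_eq_mul_cpow hs₁ hs₀ hz, stieltjesRpow_one hs₁ hs₀, hcpow,
    Complex.im_ofReal_mul, Complex.exp_ofReal_mul_I_im] at him
  rw [← div_div, eq_div_iff hsin.ne']
  linear_combination him

lemma integral_rpow_div_quadratic {s θ : ℝ} (hs₁ : -1 < s) (hs₂ : s < 1) (hs₀ : s ≠ 0)
    (hθ₀ : 0 < θ) (hθπ : θ < π) :
    ∫ x in Ioi (0 : ℝ), x ^ s / (x ^ 2 + 2 * Real.cos θ * x + 1) =
      π * Real.sin (s * θ) / (Real.sin (π * s) * Real.sin θ) := by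
  rcases hs₀.lt_or_gt with hneg | hpos
  · exact integral_rpow_div_quadratic_of_neg hs₁ hneg hθ₀ hθπ
  · rw [← integral_rpow_neg_div_quadratic,
      integral_rpow_div_quadratic_of_neg (by linarith) (by linarith) hθ₀ hθπ, neg_mul, mul_neg,
      Real.sin_neg, Real.sin_neg, neg_mul, mul_neg, neg_div_neg_eq]

/-- For `0 < α < 1`, the Lamperti density
`g(x) = (sin(πα)/(πα)) / (x² + 2cos(πα)x + 1)` on `(0,∞)` is a probability density, and
for every real `-1 < s < 1` its `s`-th moment is `sin(παs)/(α sin(πs))` (equal to `1` when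
`s = 0`). -/
theorem lamperti_density_moments (α : ℝ) (hα₁ : 0 < α) (hα₂ : α < 1) :
    (∀ x ∈ Ioi (0 : ℝ),
        0 ≤ Real.sin (π * α) / (π * α) * (1 / (x ^ 2 + 2 * Real.cos (π * α) * x + 1))) ∧
    (∫ x in Ioi (0 : ℝ),
        Real.sin (π * α) / (π * α) * (1 / (x ^ 2 + 2 * Real.cos (π * α) * x + 1)) = 1) ∧
    ∀ s : ℝ, -1 < s → s < 1 → s ≠ 0 →
      ∫ x in Ioi (0 : ℝ),
          x ^ s * (Real.sin (π * α) / (π * α) * (1 / (x ^ 2 + 2 * Real.cos (π * α) * x + 1))) =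
        Real.sin (π * α * s) / (α * Real.sin (π * s)) := by
  have hθ₀ : 0 < π * α := by positivity
  have hθπ : π * α < π := by nlinarith [pi_pos]
  have hsin : 0 < Real.sin (π * α) := sin_pos_of_pos_of_lt_pi hθ₀ hθπ
  refine ⟨fun x _ => by have := quadratic_pos x hsin.ne'; positivity, ?_,
    fun s hs₁ hs₂ hs₀ => ?_⟩
  · rw [integral_const_mul, integral_one_div_quadratic hθ₀ hθπ]
    field_simp
  · calc ∫ x in Ioi (0 : ℝ),
          x ^ s * (Real.sin (π * α) / (π * α) * (1 / (x ^ 2 + 2 * Real.cos (π * α) * x + 1)))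
        = Real.sin (π * α) / (π * α) *
            ∫ x in Ioi (0 : ℝ), x ^ s / (x ^ 2 + 2 * Real.cos (π * α) * x + 1) := by
          rw [← integral_const_mul]
          congr 1 with x
          ring
      _ = Real.sin (π * α * s) / (α * Real.sin (π * s)) := by
          rw [integral_rpow_div_quadratic hs₁ hs₂ hs₀ hθ₀ hθπ]
          field_simp
end
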